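/- For z ∈ ℂ with -2 < Re z < -1, the Fourier transform of η ↦ (1+η²)^{z/2} on ℝ equals x ↦ (2π·2^{(1+z)/2}/(π^{1/2} Γ(-z/2))) |x|^{-(1+z)/2} K_{(1+z)/2}(|x|) for x ≠ 0, where K is the modified Bessel function of the second kind. -/

import Mathlib

open Complex MeasureTheory

/-- The modified Bessel function of the second kind, defined by the standard
integral representation `K_ν(x) = ∫_0^∞ e^{-x cosh t} cosh(ν t) dt`. -/
noncomputable def besselK (ν : ℂ) (x : ℝ) : ℂ :=
  ∫ t in Set.Ioi (0 : ℝ), (Real.exp (-x * Real.cosh t) : ℂ) * Complex.cosh (ν * t)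

open Set Real

lemma measurable_ofReal_cpow (c : ℂ) : Measurable fun t : ℝ => (t : ℂ) ^ c := by
  have : (fun t : ℝ => (t : ℂ) ^ c) = fun t : ℝ =>
      if (t : ℂ) = 0 then (if c = 0 then 1 else 0) else Complex.exp (Complex.log t * c) := by
    funext t; rw [Complex.cpow_def]
  rw [this]
  apply Measurable.ite
  · have : {t : ℝ | (t : ℂ) = 0} = {0} := by ext t; simp
    rw [show (fun t : ℝ => (t:ℂ) = 0) = fun t : ℝ => t ∈ {t : ℝ | (t:ℂ) = 0} from rfl, this]
    exact measurableSet_singleton 0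
  · exact measurable_const
  · exact (Complex.measurable_ofReal.clog.mul_const c).cexp

lemma besselK_neg (ν : ℂ) (x : ℝ) : besselK (-ν) x = besselK ν x := by
  unfold besselK
  simp [neg_mul, Complex.cosh_neg]

lemma integrableOn_rep {ν : ℂ} (hν : 0 < ν.re) (a : ℝ) :
    IntegrableOn (fun s : ℝ => (s : ℂ) ^ (ν - 1) * (Real.exp (-s - a ^ 2 / (4 * s)) : ℂ))
      (Set.Ioi 0) := by
  refine (Real.GammaIntegral_convergent hν).mono' ?_ ?_
  · exact ((measurable_ofReal_cpow (ν - 1)).mul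
      (Complex.measurable_ofReal.comp (Real.measurable_exp.comp (by fun_prop)))).aestronglyMeasurable
  · rw [ae_restrict_iff' measurableSet_Ioi]
    refine Filter.Eventually.of_forall fun s hs => ?_
    rw [mem_Ioi] at hs
    rw [norm_mul, Complex.norm_real, Real.norm_eq_abs,
      Complex.norm_cpow_eq_rpow_re_of_pos hs, Complex.sub_re, Complex.one_re]
    rw [_root_.abs_of_nonneg (Real.exp_nonneg _), mul_comm]
    gcongr
    have : 0 ≤ a ^ 2 / (4 * s) := by positivity
    linarith

lemma besselK_rep {ν : ℂ} (hν : 0 < ν.re) {a : ℝ} (ha : 0 < a) :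
    ∫ s in Set.Ioi (0:ℝ), (s : ℂ) ^ (ν - 1) * (Real.exp (-s - a ^ 2 / (4 * s)) : ℂ)
      = 2 * ((a / 2 : ℝ) : ℂ) ^ ν * besselK ν a := by
  set c : ℝ := a / 2 with hcdef
  have hc : 0 < c := by positivity
  set g : ℝ → ℂ := fun s : ℝ => (s : ℂ) ^ (ν - 1) * (Real.exp (-s - a ^ 2 / (4 * s)) : ℂ)
    with hgdef
  set F : ℝ → ℂ := fun t : ℝ => (Real.exp (-(a * Real.cosh t)) : ℂ) * Complex.exp (ν * t)
    with hFdef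
  have hcν : ((c : ℝ) : ℂ) ^ ν ≠ 0 := by
    intro h
    rcases (Complex.cpow_eq_zero_iff _ _).mp h with ⟨h0, -⟩
    exact hc.ne' (by exact_mod_cast h0)
  have key : ∀ t : ℝ, |c * Real.exp t| • g (c * Real.exp t) = ((c : ℝ) : ℂ) ^ ν * F t := by
    intro t
    have hct : 0 < c * Real.exp t := by positivity
    have hne : ((c * Real.exp t : ℝ) : ℂ) ≠ 0 := by exact_mod_cast hct.ne'
    have hexp : -(c * Real.exp t) - a ^ 2 / (4 * (c * Real.exp t)) = -(a * Real.cosh t) := by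
      rw [Real.cosh_eq, hcdef]
      rw [Real.exp_neg]
      field_simp
      ring
    have hpow : ((c * Real.exp t : ℝ) : ℂ) ^ ν = ((c : ℝ) : ℂ) ^ ν * Complex.exp (ν * t) := by
      rw [Complex.ofReal_mul, mul_cpow_ofReal_nonneg hc.le (Real.exp_pos t).le]
      congr 1
      rw [Complex.ofReal_exp, Complex.cpow_def_of_ne_zero (Complex.exp_ne_zero _),
        Complex.log_exp (by simp [Real.pi_pos]) (by simp [Real.pi_pos.le]), mul_comm]
    have hmul : ((c * Real.exp t : ℝ) : ℂ) * ((c * Real.exp t : ℝ) : ℂ) ^ (ν - 1)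
        = ((c * Real.exp t : ℝ) : ℂ) ^ ν := by
      nth_rewrite 1 [← Complex.cpow_one ((c * Real.exp t : ℝ) : ℂ)]
      rw [← Complex.cpow_add _ _ hne]
      ring_nf
    rw [_root_.abs_of_pos hct, Complex.real_smul, hgdef]
    show ((c * Real.exp t : ℝ) : ℂ) * (((c * Real.exp t : ℝ) : ℂ) ^ (ν - 1)
      * (Real.exp (-(c * Real.exp t) - a ^ 2 / (4 * (c * Real.exp t))) : ℂ)) = _
    rw [← mul_assoc, hmul, hexp, hpow, hFdef]
    ring
  have hderiv : ∀ t ∈ Set.univ, HasDerivWithinAt (fun t : ℝ => c * Real.exp t)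
      (c * Real.exp t) Set.univ t :=
    fun t _ => ((Real.hasDerivAt_exp t).const_mul c).hasDerivWithinAt
  have hinj : Set.InjOn (fun t : ℝ => c * Real.exp t) Set.univ := by
    intro p _ q _ h
    exact Real.exp_injective (mul_left_cancel₀ hc.ne' h)
  have himg : (fun t : ℝ => c * Real.exp t) '' Set.univ = Set.Ioi 0 := by
    rw [Set.image_univ]
    ext y
    simp only [Set.mem_range, Set.mem_Ioi]
    constructor
    · rintro ⟨t, rfl⟩; positivity
    · intro hy
      refine ⟨Real.log (y / c), ?_⟩
      rw [Real.exp_log (by positivity)]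
      field_simp
  have hchg := integral_image_eq_integral_abs_deriv_smul MeasurableSet.univ hderiv hinj g
  rw [himg, Measure.restrict_univ] at hchg
  have hkey : (fun t => |c * Real.exp t| • g (c * Real.exp t)) = fun t => ((c:ℝ):ℂ)^ν * F t :=
    funext key
  have hgint : IntegrableOn g (Set.Ioi 0) := integrableOn_rep hν a
  have h1 : Integrable (fun t => ((c:ℝ):ℂ)^ν * F t) := by
    have h0 := (integrableOn_image_iff_integrableOn_abs_deriv_smul MeasurableSet.univ hderiv
      hinj g).mp (himg ▸ hgint)
    rwa [hkey, IntegrableOn, Measure.restrict_univ] at h0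
  have hFi : Integrable F := by
    have h2 := h1.const_mul (((c:ℝ):ℂ)^ν)⁻¹
    simpa [← mul_assoc, inv_mul_cancel₀ hcν] using h2
  have hFneg : Integrable (fun t : ℝ => F (-t)) := by
    have h := (Measure.measurePreserving_neg (volume : Measure ℝ)).integrable_comp_emb
      (MeasurableEquiv.neg ℝ).measurableEmbedding (g := F)
    exact h.mpr hFi
  have hsum : ∫ t : ℝ, F t = 2 * besselK ν a := by
    rw [← intervalIntegral.integral_Iic_add_Ioi (b := (0:ℝ)) hFi.integrableOn hFi.integrableOn]
    have hIic : ∫ t in Set.Iic (0:ℝ), F t = ∫ t in Set.Ioi (0:ℝ), F (-t) := by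
      rw [show (0:ℝ) = -0 from by norm_num, ← integral_comp_neg_Ioi]
      norm_num
    rw [hIic, ← MeasureTheory.integral_add hFneg.integrableOn hFi.integrableOn]
    rw [besselK, ← MeasureTheory.integral_const_mul]
    refine setIntegral_congr_fun measurableSet_Ioi fun t ht => ?_
    rw [hFdef]
    simp only [Real.cosh_neg, Complex.ofReal_neg, mul_neg, neg_mul]
    rw [Complex.cosh]
    push_cast
    ring
  calc ∫ s in Set.Ioi (0:ℝ), g s = ∫ t : ℝ, |c * Real.exp t| • g (c * Real.exp t) := hchg
    _ = ∫ t : ℝ, ((c:ℝ):ℂ)^ν * F t := by rw [hkey]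
    _ = ((c:ℝ):ℂ)^ν * ∫ t : ℝ, F t := by rw [MeasureTheory.integral_const_mul]
    _ = 2 * ((c:ℝ):ℂ)^ν * besselK ν a := by rw [hsum]; ring

lemma inner_gauss (x : ℝ) {t : ℝ} (ht : 0 < t) :
    ∫ η : ℝ, (Real.exp (-((1 + η ^ 2) * t)) : ℂ) * Complex.exp (-Complex.I * x * η)
      = ((Real.pi : ℂ) / t) ^ (1 / 2 : ℂ) * (Real.exp (-t - x ^ 2 / (4 * t)) : ℂ) := by
  have hb : 0 < ((t : ℂ)).re := by simpa using ht
  have h := fourierIntegral_gaussian hb (-x : ℂ)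
  calc ∫ η : ℝ, (Real.exp (-((1 + η ^ 2) * t)) : ℂ) * Complex.exp (-Complex.I * x * η)
      = ∫ η : ℝ, Complex.exp (-(t : ℂ)) *
        (Complex.exp (Complex.I * (-x) * η) * Complex.exp (-(t : ℂ) * η ^ 2)) := by
        congr 1; funext η
        rw [Complex.ofReal_exp, ← Complex.exp_add, ← Complex.exp_add, ← Complex.exp_add]
        congr 1
        push_cast
        ring
    _ = Complex.exp (-(t : ℂ)) *
        ∫ η : ℝ, Complex.exp (Complex.I * (-x) * η) * Complex.exp (-(t : ℂ) * η ^ 2) :=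
        MeasureTheory.integral_const_mul _ _
    _ = Complex.exp (-(t : ℂ)) *
        (((Real.pi : ℂ) / t) ^ (1 / 2 : ℂ) * Complex.exp (-(-x : ℂ) ^ 2 / (4 * t))) := by rw [h]
    _ = ((Real.pi : ℂ) / t) ^ (1 / 2 : ℂ) * (Real.exp (-t - x ^ 2 / (4 * t)) : ℂ) := by
        rw [show (Complex.exp (-(t:ℂ)) * (((Real.pi : ℂ) / t) ^ (1 / 2 : ℂ) *
          Complex.exp (-(-x : ℂ) ^ 2 / (4 * t)))) = ((Real.pi : ℂ) / t) ^ (1 / 2 : ℂ) *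
          (Complex.exp (-(t:ℂ)) * Complex.exp (-(-x : ℂ) ^ 2 / (4 * t))) from by ring,
          ← Complex.exp_add, Complex.ofReal_exp]
        congr 1
        push_cast
        ring

lemma fubini_int {w : ℂ} (hw : 1 / 2 < w.re) (x : ℝ) :
    Integrable (Function.uncurry fun (η : ℝ) (t : ℝ) =>
      (t : ℂ) ^ (w - 1) * (Real.exp (-((1 + η ^ 2) * t)) : ℂ) * Complex.exp (-Complex.I * x * η))
      (volume.prod (volume.restrict (Set.Ioi 0))) := by
  have hwpos : 0 < w.re := by linarith
  have hnorm : ∀ (η : ℝ) (t : ℝ), 0 < t →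
      ‖(t : ℂ) ^ (w - 1) * (Real.exp (-((1 + η ^ 2) * t)) : ℂ) *
        Complex.exp (-Complex.I * x * η)‖ = t ^ (w.re - 1) * Real.exp (-((1 + η ^ 2) * t)) := by
    intro η t ht
    rw [norm_mul, norm_mul,
      Complex.norm_cpow_eq_rpow_re_of_pos ht, Complex.sub_re, Complex.one_re,
      Complex.norm_real, Real.norm_eq_abs, _root_.abs_of_nonneg (Real.exp_nonneg _),
      Complex.norm_exp]
    have : (-Complex.I * x * η).re = 0 := by simp
    rw [this, Real.exp_zero, mul_one]
  have hmeas : AEStronglyMeasurable (Function.uncurry fun (η : ℝ) (t : ℝ) =>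
      (t : ℂ) ^ (w - 1) * (Real.exp (-((1 + η ^ 2) * t)) : ℂ) * Complex.exp (-Complex.I * x * η))
      (volume.prod (volume.restrict (Set.Ioi 0))) := by
    apply Measurable.aestronglyMeasurable
    refine Measurable.mul (Measurable.mul ?_ ?_) ?_
    · exact (measurable_ofReal_cpow (w - 1)).comp measurable_snd
    · exact Complex.measurable_ofReal.comp (Real.measurable_exp.comp (by fun_prop))
    · exact ((Complex.measurable_ofReal.comp measurable_fst).const_mul (-Complex.I * x)).cexp
  rw [MeasureTheory.integrable_prod_iff hmeas]
  constructor
  · refine Filter.Eventually.of_forall fun η => ?_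
    simp only [Function.uncurry_apply_pair]
    apply Integrable.mul_const
    refine (Real.GammaIntegral_convergent hwpos).mono' ?_ ?_
    · exact ((measurable_ofReal_cpow (w - 1)).mul
        (Complex.measurable_ofReal.comp (Real.measurable_exp.comp (by fun_prop)))).aestronglyMeasurable
    · rw [ae_restrict_iff' measurableSet_Ioi]
      refine Filter.Eventually.of_forall fun t ht => ?_
      rw [Set.mem_Ioi] at ht
      have h1 : ‖(t : ℂ) ^ (w - 1) * (Real.exp (-((1 + η ^ 2) * t)) : ℂ)‖
          = t ^ (w.re - 1) * Real.exp (-((1 + η ^ 2) * t)) := by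
        have h2 : ‖Complex.exp (-Complex.I * x * η)‖ = 1 := by
          rw [Complex.norm_exp]
          simp
        have h3 := hnorm η t ht
        rwa [norm_mul ((t : ℂ) ^ (w - 1) * (Real.exp (-((1 + η ^ 2) * t)) : ℂ)) _, h2,
          mul_one] at h3
      rw [h1, mul_comm (Real.exp (-t)) _]
      gcongr
      nlinarith [sq_nonneg η, ht.le]
  · simp only [Function.uncurry_apply_pair]
    have hcalc : (fun η : ℝ => ∫ t in Set.Ioi (0 : ℝ), ‖(t : ℂ) ^ (w - 1) *
        (Real.exp (-((1 + η ^ 2) * t)) : ℂ) * Complex.exp (-Complex.I * x * η)‖)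
        = fun η : ℝ => (1 + η ^ 2) ^ (-w.re) * Real.Gamma w.re := by
      funext η
      have hr : 0 < 1 + η ^ 2 := by positivity
      rw [setIntegral_congr_fun measurableSet_Ioi fun t ht => hnorm η t ht,
        integral_rpow_mul_exp_neg_mul_Ioi hwpos hr, one_div, Real.inv_rpow hr.le,
        ← Real.rpow_neg hr.le]
    rw [hcalc]
    have hint := integrable_rpow_neg_one_add_norm_sq (E := ℝ) (μ := volume)
      (r := 2 * w.re) (by simp; linarith)
    have : (fun y : ℝ => ((1 : ℝ) + ‖y‖ ^ 2) ^ (-(2 * w.re) / 2))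
        = fun η : ℝ => (1 + η ^ 2) ^ (-w.re) := by
      funext y
      rw [Real.norm_eq_abs, _root_.sq_abs]
      congr 1
      ring
    rw [this] at hint
    exact hint.mul_const _

theorem fourier_transform_bessel_potential (z : ℂ) (hz₁ : -2 < z.re) (hz₂ : z.re < -1)
    (x : ℝ) (hx : x ≠ 0) :
    (∫ η : ℝ, ((1 : ℂ) + (η : ℂ) ^ 2) ^ (z / 2) * Complex.exp (-Complex.I * x * η))
      = 2 * Real.pi * (2 : ℂ) ^ ((1 + z) / 2) / (Real.sqrt Real.pi * Complex.Gamma (-z / 2))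
        * ((|x| : ℝ) : ℂ) ^ (-(1 + z) / 2) * besselK ((1 + z) / 2) |x| := by
  have hπ : (0:ℝ) < Real.pi := Real.pi_pos
  set w : ℂ := -z / 2 with hwdef
  have hwre : w.re = -z.re / 2 := by
    rw [hwdef, show (-z/2 : ℂ) = -z / ((2:ℝ):ℂ) from by norm_num, Complex.div_ofReal_re,
      Complex.neg_re]
  have hw : 1 / 2 < w.re := by rw [hwre]; linarith
  have hwpos : 0 < w.re := by linarith
  have hΓ : Complex.Gamma w ≠ 0 := Complex.Gamma_ne_zero_of_re_pos hwpos
  have ha : 0 < |x| := abs_pos.mpr hx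
  set ν : ℂ := w - 1/2 with hνdef
  have hν : 0 < ν.re := by
    rw [hνdef]
    simp only [Complex.sub_re]
    norm_num
    linarith
  have hν2 : ν = -((1 + z) / 2) := by rw [hνdef, hwdef]; ring
  have step1 : ∀ η : ℝ, (∫ t in Set.Ioi (0:ℝ),
      (t:ℂ)^(w-1) * (Real.exp (-((1 + η^2) * t)) : ℂ) * Complex.exp (-Complex.I * x * η))
      = Complex.Gamma w * (((1:ℂ) + (η:ℂ)^2) ^ (z/2) * Complex.exp (-Complex.I * x * η)) := by
    intro η
    have hr : (0:ℝ) < 1 + η^2 := by positivity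
    calc (∫ t in Set.Ioi (0:ℝ),
        (t:ℂ)^(w-1) * (Real.exp (-((1 + η^2) * t)) : ℂ) * Complex.exp (-Complex.I * x * η))
        = (∫ t in Set.Ioi (0:ℝ),
          (t:ℂ)^(w-1) * Complex.exp (-((((1 + η^2):ℝ):ℂ) * t))) * Complex.exp (-Complex.I * x * η) := by
          rw [← MeasureTheory.integral_mul_const]
          refine setIntegral_congr_fun measurableSet_Ioi fun t _ => ?_
          have h0 : ((-((1 + η^2) * t) : ℝ) : ℂ) = -((((1 + η^2):ℝ):ℂ) * t) := by push_cast; ring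
          rw [Complex.ofReal_exp, h0]
      _ = ((1 / (((1 + η^2):ℝ):ℂ)) ^ w * Complex.Gamma w) * Complex.exp (-Complex.I * x * η) := by
          rw [integral_cpow_mul_exp_neg_mul_Ioi hwpos hr]
      _ = Complex.Gamma w * (((1:ℂ) + (η:ℂ)^2) ^ (z/2) * Complex.exp (-Complex.I * x * η)) := by
          have h1 : (1 / (((1 + η^2):ℝ):ℂ)) ^ w = ((1:ℂ) + (η:ℂ)^2) ^ (z/2) := by
            rw [one_div, inv_cpow _ _ (by
                rw [Complex.arg_ofReal_of_nonneg hr.le]; exact Real.pi_ne_zero.symm),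
              ← Complex.cpow_neg]
            congr 1
            · push_cast; ring
            · rw [hwdef]; ring
          rw [h1]; ring
  have hsπ : ((Real.sqrt Real.pi : ℝ) : ℂ) ≠ 0 := by
    simp only [ne_eq, Complex.ofReal_eq_zero]
    positivity
  have hππ : ((Real.sqrt Real.pi : ℝ) : ℂ) * ((Real.sqrt Real.pi : ℝ) : ℂ) = (Real.pi : ℂ) := by
    rw [← Complex.ofReal_mul, Real.mul_self_sqrt hπ.le]
  have hsqrt : (Real.pi : ℂ) ^ (1/2 : ℂ) = ((Real.sqrt Real.pi : ℝ) : ℂ) := by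
    rw [show ((1:ℂ)/2) = ((1/2 : ℝ) : ℂ) from by norm_num, ← Complex.ofReal_cpow hπ.le,
      Real.sqrt_eq_rpow]
  calc (∫ η : ℝ, ((1 : ℂ) + (η : ℂ) ^ 2) ^ (z / 2) * Complex.exp (-Complex.I * x * η))
      = ∫ η : ℝ, (Complex.Gamma w)⁻¹ * ∫ t in Set.Ioi (0:ℝ),
          (t:ℂ)^(w-1) * (Real.exp (-((1 + η^2) * t)) : ℂ) * Complex.exp (-Complex.I * x * η) := by
        congr 1; funext η
        rw [step1 η, inv_mul_cancel_left₀ hΓ]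
    _ = (Complex.Gamma w)⁻¹ * ∫ η : ℝ, ∫ t in Set.Ioi (0:ℝ),
          (t:ℂ)^(w-1) * (Real.exp (-((1 + η^2) * t)) : ℂ) * Complex.exp (-Complex.I * x * η) :=
        MeasureTheory.integral_const_mul _ _
    _ = (Complex.Gamma w)⁻¹ * ∫ t in Set.Ioi (0:ℝ), ∫ η : ℝ,
          (t:ℂ)^(w-1) * (Real.exp (-((1 + η^2) * t)) : ℂ) * Complex.exp (-Complex.I * x * η) := by
        rw [MeasureTheory.integral_integral_swap (fubini_int hw x)]
    _ = (Complex.Gamma w)⁻¹ * ∫ t in Set.Ioi (0:ℝ),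
          (t:ℂ)^(w-1) * (((Real.pi : ℂ) / t) ^ (1/2 : ℂ) * (Real.exp (-t - x^2/(4*t)) : ℂ)) := by
        congr 1
        refine setIntegral_congr_fun measurableSet_Ioi fun t ht => ?_
        rw [Set.mem_Ioi] at ht
        rw [show (fun η : ℝ => (t:ℂ)^(w-1) * (Real.exp (-((1 + η^2) * t)) : ℂ) *
            Complex.exp (-Complex.I * x * η)) = fun η : ℝ => (t:ℂ)^(w-1) *
            ((Real.exp (-((1 + η^2) * t)) : ℂ) * Complex.exp (-Complex.I * x * η)) from
          funext fun η => by ring]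
        rw [MeasureTheory.integral_const_mul, inner_gauss x ht]
    _ = (Complex.Gamma w)⁻¹ * ((Real.pi : ℂ) ^ (1/2 : ℂ) * ∫ t in Set.Ioi (0:ℝ),
          (t:ℂ)^(ν-1) * (Real.exp (-t - |x|^2/(4*t)) : ℂ)) := by
        rw [show (Real.pi:ℂ)^(1/2:ℂ) * ∫ t in Set.Ioi (0:ℝ),
            (t:ℂ)^(ν-1) * (Real.exp (-t - |x|^2/(4*t)) : ℂ)
            = ∫ t in Set.Ioi (0:ℝ), (Real.pi:ℂ)^(1/2:ℂ) *
              ((t:ℂ)^(ν-1) * (Real.exp (-t - |x|^2/(4*t)) : ℂ)) from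
          (MeasureTheory.integral_const_mul _ _).symm]
        congr 1
        refine setIntegral_congr_fun measurableSet_Ioi fun t ht => ?_
        rw [Set.mem_Ioi] at ht
        have hne : (t:ℂ) ≠ 0 := by exact_mod_cast ht.ne'
        have hsplit : ((Real.pi : ℂ)/t)^(1/2 : ℂ)
            = (Real.pi : ℂ)^(1/2 : ℂ) * ((t:ℂ)^(1/2 : ℂ))⁻¹ := by
          rw [show ((Real.pi:ℂ)/t) = ((Real.pi / t : ℝ) : ℂ) from by push_cast; rfl,
            show (Real.pi/t : ℝ) = Real.pi * t⁻¹ from div_eq_mul_inv _ _,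
            Complex.ofReal_mul, mul_cpow_ofReal_nonneg hπ.le (inv_nonneg.mpr ht.le)]
          congr 1
          rw [Complex.ofReal_inv, inv_cpow _ _ (by
            rw [Complex.arg_ofReal_of_nonneg ht.le]; exact Real.pi_ne_zero.symm)]
        have hcomb : (t:ℂ)^(w-1) * ((t:ℂ)^(1/2 : ℂ))⁻¹ = (t:ℂ)^(ν-1) := by
          rw [← Complex.cpow_neg, ← Complex.cpow_add _ _ hne, hνdef]
          congr 1; ring
        have hx2 : (x:ℝ)^2 = |x|^2 := (_root_.sq_abs x).symm
        rw [hsplit, hx2, show (t:ℂ)^(w-1) * ((Real.pi : ℂ)^(1/2 : ℂ) * ((t:ℂ)^(1/2 : ℂ))⁻¹ *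
            (Real.exp (-t - |x|^2/(4*t)) : ℂ)) = (Real.pi : ℂ)^(1/2 : ℂ) *
            ((t:ℂ)^(w-1) * ((t:ℂ)^(1/2 : ℂ))⁻¹ * (Real.exp (-t - |x|^2/(4*t)) : ℂ)) from by ring,
          hcomb]
    _ = (Complex.Gamma w)⁻¹ * ((Real.pi : ℂ) ^ (1/2 : ℂ) *
          (2 * ((|x| / 2 : ℝ) : ℂ) ^ ν * besselK ν |x|)) := by
        rw [besselK_rep hν ha]
    _ = 2 * Real.pi * (2 : ℂ) ^ ((1 + z) / 2) / (Real.sqrt Real.pi * Complex.Gamma w)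
        * ((|x| : ℝ) : ℂ) ^ (-(1 + z) / 2) * besselK ((1 + z) / 2) |x| := by
        have hbes : besselK ν |x| = besselK ((1 + z) / 2) |x| := by
          rw [hν2, besselK_neg]
        have hhalf : ((|x| / 2 : ℝ) : ℂ) ^ ν
            = ((|x| : ℝ) : ℂ) ^ (-(1 + z) / 2) * (2:ℂ) ^ ((1 + z) / 2) := by
          rw [show (|x| / 2 : ℝ) = |x| * 2⁻¹ from by ring, Complex.ofReal_mul,
            mul_cpow_ofReal_nonneg (abs_nonneg x) (by norm_num)]
          congr 1
          · rw [hν2]; congr 1; ring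
          · rw [show ((2⁻¹:ℝ):ℂ) = ((2:ℂ))⁻¹ from by push_cast; rfl,
              inv_cpow _ _ (by
                rw [show (2:ℂ) = ((2:ℝ):ℂ) from by norm_num,
                  Complex.arg_ofReal_of_nonneg (by norm_num)]
                exact Real.pi_ne_zero.symm),
              ← Complex.cpow_neg, hν2, neg_neg]
        rw [hbes, hhalf, hsqrt, ← hππ]
        field_simp
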